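/- For the m-Dyck shift with m > 1 and any n, the sum ∑_{k≥1} (a_n · w_k)/(a_{n+k}) ≤ 1/m, where a_n is the number of admissible words of length n and w_k is the number of balanced words of length k. -/

import Mathlib

/-- Symbols of the `m`-Dyck alphabet: `a j` is the opening bracket `α_j`,
`b j` is the closing bracket `β_j`. -/
inductive DSym (m : ℕ) : Type
  | a : Fin m → DSym m
  | b : Fin m → DSym m
  deriving DecidableEq

namespace Dyck

/-- One step of the stack evaluation computing the reduced form (canonical
representative in the syntactic monoid).  `none` is the zero of the monoid;
`some (bs, as)` is the reduced word `β_{bs} α_{as}` (unmatched closing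
brackets, then a stack of unmatched opening brackets). -/
def step {m : ℕ} : Option (List (Fin m) × List (Fin m)) → DSym m →
    Option (List (Fin m) × List (Fin m))
  | none, _ => none
  | some (bs, as), .a j => some (bs, j :: as)
  | some (bs, []), .b j => some (bs ++ [j], [])
  | some (bs, i :: as), .b j => if i = j then some (bs, as) else none

/-- The image of a word in the syntactic monoid `M` (in reduced form). -/
def eval {m : ℕ} (w : List (DSym m)) : Option (List (Fin m) × List (Fin m)) :=
  w.foldl step (some ([], []))

/-- A word is admissible (belongs to the Dyck language) iff it is nonzero mod `M`. -/
def Admissible {m : ℕ} (w : List (DSym m)) : Prop := eval w ≠ none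

/-- A word is balanced iff it is `≡ 1` mod `M`. -/
def Balanced {m : ℕ} (w : List (DSym m)) : Prop := eval w = some ([], [])

end Dyck

namespace Dyck

/-- `aCount m n` is the number of admissible words of length `n` in the `m`-Dyck language. -/
noncomputable def aCount (m n : ℕ) : ℕ :=
  {w : List (DSym m) | w.length = n ∧ Admissible w}.ncard

/-- `wCount m k` is the number of balanced words of length `k` in the `m`-Dyck language. -/
noncomputable def wCount (m k : ℕ) : ℕ :=
  {w : List (DSym m) | w.length = k ∧ Balanced w}.ncard

end Dyck

/-!
An admissible word can be extended by one letter in at least `m + 1` admissible ways (any opening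
bracket, or the closing bracket matching the top of the stack), so `a (n + k) ≥ (m + 1) ^ k a n`
and the `k`-th term is at most `w k / (m + 1) ^ k`. A balanced word is determined by its Dyck path
and the labels of its opening brackets, so `w (2 j) ≤ C j m ^ j` and `w` vanishes in odd degree.
With `x = m / (m + 1) ^ 2`, the Catalan recurrence keeps the partial sums of `∑ C j x ^ j` below
the fixed point `y = (m + 1) / m` of `y = 1 + x y ^ 2`, so the sum is at most `y - 1 = 1 / m`.
-/

open Finset DyckStep

theorem Finset.sum_range_diag_mul_le_sq {R : Type*} [CommSemiring R] [PartialOrder R]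
    [IsOrderedRing R] {f : ℕ → R} (hf : ∀ i, 0 ≤ f i) (N : ℕ) :
    ∑ j ∈ range N, ∑ i ∈ range (j + 1), f i * f (j - i) ≤ (∑ i ∈ range N, f i) ^ 2 := by
  rw [sum_range_diag_flip N fun i l => f i * f l, sq, sum_mul_sum]
  exact sum_le_sum fun i _ => sum_le_sum_of_subset_of_nonneg
    (range_subset_range.mpr (Nat.sub_le N i)) fun l _ _ => mul_nonneg (hf i) (hf l)

theorem Finset.sum_range_two_mul_of_forall_odd_eq_zero {M : Type*} [AddCommMonoid M] {f : ℕ → M}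
    (hf : ∀ k, Odd k → f k = 0) (N : ℕ) :
    ∑ k ∈ range (2 * N), f k = ∑ j ∈ range N, f (2 * j) := by
  induction N with
  | zero => simp
  | succ N ih =>
    rw [mul_add, mul_one, sum_range_succ, sum_range_succ, sum_range_succ, ih,
      hf _ (odd_two_mul_add_one N), add_zero]

theorem sum_range_catalan_mul_pow_le {x y : ℝ} (hx : 0 ≤ x)
    (hxy : 1 + x * y ^ 2 ≤ y) (N : ℕ) : ∑ j ∈ range N, (catalan j : ℝ) * x ^ j ≤ y := by
  induction N with
  | zero =>
    rw [sum_range_zero]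
    linarith [mul_nonneg hx (sq_nonneg y)]
  | succ N ih =>
    set f : ℕ → ℝ := fun j => (catalan j : ℝ) * x ^ j
    have hf : ∀ j, 0 ≤ f j := fun j => by positivity
    have hrec : ∀ j, f (j + 1) = x * ∑ i ∈ range (j + 1), f i * f (j - i) := fun j => by
      simp only [f]
      rw [catalan_succ', Nat.sum_antidiagonal_eq_sum_range_succ (fun a b => catalan a * catalan b),
        Nat.cast_sum, sum_mul, mul_sum]
      refine sum_congr rfl fun i hi => ?_
      obtain ⟨l, rfl⟩ := Nat.exists_eq_add_of_le (mem_range_succ_iff.mp hi)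
      simp only [Nat.add_sub_cancel_left, Nat.cast_mul]
      ring
    calc ∑ j ∈ range (N + 1), f j
        = x * ∑ j ∈ range N, ∑ i ∈ range (j + 1), f i * f (j - i) + 1 := by
          rw [sum_range_succ', sum_congr rfl fun j _ => hrec j, ← mul_sum]
          simp [f]
      _ ≤ x * (∑ j ∈ range N, f j) ^ 2 + 1 := by
          gcongr; exact sum_range_diag_mul_le_sq hf N
      _ ≤ x * y ^ 2 + 1 := by gcongr
      _ ≤ y := by linarith

namespace Dyck

variable {m : ℕ}

instance : Finite (DSym m) :=
  Finite.of_surjective (Sum.elim DSym.a DSym.b) fun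
    | .a j => ⟨.inl j, rfl⟩
    | .b j => ⟨.inr j, rfl⟩

theorem finite_setOf_length_eq (n : ℕ) (P : List (DSym m) → Prop) :
    {w : List (DSym m) | w.length = n ∧ P w}.Finite :=
  (List.finite_length_eq (DSym m) n).subset fun _ hw => hw.1

theorem setOf_length_eq_zero (P : List (DSym m) → Prop) (h : P []) :
    {w : List (DSym m) | w.length = 0 ∧ P w} = {[]} := by
  ext w
  simp only [Set.mem_ofPred_eq, Set.mem_singleton_iff, List.length_eq_zero_iff]
  exact ⟨And.left, fun hw => ⟨hw, hw ▸ h⟩⟩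

@[simp]
theorem foldl_step_none (w : List (DSym m)) : w.foldl step none = none := by
  induction w with
  | nil => rfl
  | cons _ _ ih => exact ih

theorem eval_append_singleton (w : List (DSym m)) (s : DSym m) :
    eval (w ++ [s]) = step (eval w) s := by
  simp [eval, List.foldl_append]

theorem length_le_of_foldl_step_eq_some {w : List (DSym m)} {bs as bs' as' : List (Fin m)}
    (h : w.foldl step (some (bs, as)) = some (bs', as')) : bs.length ≤ bs'.length := by
  induction w generalizing bs as with
  | nil => simp_all
  | cons s w ih =>
    rcases s with j | j
    · exact ih h
    · rcases as with _ | ⟨i, as⟩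
      · exact (Nat.le_succ _).trans (by simpa using ih h)
      · by_cases hij : i = j
        · exact ih (by simpa [step, hij] using h)
        · simp [step, hij] at h

theorem foldl_step_cons_b {j : Fin m} {w : List (DSym m)} {st as' : List (Fin m)}
    (h : (DSym.b j :: w).foldl step (some ([], st)) = some ([], as')) :
    ∃ st', st = j :: st' ∧ w.foldl step (some ([], st')) = some ([], as') := by
  rw [List.foldl_cons] at h
  rcases st with _ | ⟨i, st'⟩
  · simpa [step] using length_le_of_foldl_step_eq_some h
  · by_cases hij : i = j
    · subst hij
      exact ⟨st', rfl, by simpa [step] using h⟩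
    · simp [step, hij] at h

def shape (w : List (DSym m)) : List DyckStep :=
  w.map fun | .a _ => U | .b _ => D

def labels (w : List (DSym m)) : List (Fin m) :=
  w.filterMap fun | .a j => some j | .b _ => none

theorem length_labels (w : List (DSym m)) : (labels w).length = (shape w).count U := by
  induction w with
  | nil => rfl
  | cons s w ih => cases s <;> simp_all [labels, shape]

theorem count_U_add_length_eq {w : List (DSym m)} {as as' : List (Fin m)}
    (h : w.foldl step (some ([], as)) = some ([], as')) :
    (shape w).count U + as.length = (shape w).count D + as'.length := by
  induction w generalizing as with
  | nil => simp_all [shape]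
  | cons s w ih =>
    rcases s with j | j
    · have := ih (as := j :: as) h
      simp only [shape, List.map_cons, List.count_cons, List.length_cons] at this ⊢
      grind
    · obtain ⟨st', rfl, h'⟩ := foldl_step_cons_b h
      have := ih h'
      simp only [shape, List.map_cons, List.count_cons, List.length_cons] at this ⊢
      grind

theorem eval_take_of_balanced {w : List (DSym m)} (hw : Balanced w) (i : ℕ) :
    ∃ st, eval (w.take i) = some ([], st) := by
  have hsplit : eval w = (w.drop i).foldl step (eval (w.take i)) := by
    conv_lhs => rw [eval, ← List.take_append_drop i w, List.foldl_append]
    rfl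
  rw [Balanced, hsplit] at hw
  rcases he : eval (w.take i) with _ | ⟨bs, st⟩
  · simp [he] at hw
  · rw [he] at hw
    obtain rfl : bs = [] := by simpa using length_le_of_foldl_step_eq_some hw
    exact ⟨st, rfl⟩

def toDyckWord (w : List (DSym m)) (hw : Balanced w) : DyckWord where
  toList := shape w
  count_U_eq_count_D := by simpa using count_U_add_length_eq hw
  count_D_le_count_U i := by
    obtain ⟨st, hst⟩ := eval_take_of_balanced hw i
    have := count_U_add_length_eq hst
    rw [shape, ← List.map_take]
    simp only [shape, List.length_nil] at this
    omega

theorem length_eq_two_mul_semilength {w : List (DSym m)} (hw : Balanced w) :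
    w.length = 2 * (toDyckWord w hw).semilength := by
  rw [DyckWord.two_mul_semilength_eq_length]
  exact (List.length_map _).symm

theorem eq_of_shape_eq_of_labels_eq {w₁ w₂ : List (DSym m)} {st : List (Fin m)}
    (h₁ : w₁.foldl step (some ([], st)) = some ([], []))
    (h₂ : w₂.foldl step (some ([], st)) = some ([], []))
    (hs : shape w₁ = shape w₂) (hl : labels w₁ = labels w₂) : w₁ = w₂ := by
  induction w₁ generalizing w₂ st with
  | nil =>
    simp only [shape, List.map_nil] at hs
    exact (List.map_eq_nil_iff.mp hs.symm).symm
  | cons s w₁ ih =>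
    rcases w₂ with _ | ⟨t, w₂⟩
    · simp [shape] at hs
    rcases s with i | i <;> rcases t with j | j <;> simp only [shape, labels, List.map_cons,
      List.filterMap_cons, List.cons.injEq, reduceCtorEq, false_and] at hs hl
    · obtain rfl := hl.1
      exact congrArg _ (ih h₁ h₂ hs.2 hl.2)
    · obtain ⟨st₁, rfl, h₁'⟩ := foldl_step_cons_b h₁
      obtain ⟨st₂, hst, h₂'⟩ := foldl_step_cons_b h₂
      obtain ⟨rfl, rfl⟩ := List.cons.inj hst
      exact congrArg _ (ih h₁' h₂' hs.2 hl)

theorem wCount_zero : wCount m 0 = 1 := by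
  rw [wCount, setOf_length_eq_zero Balanced rfl, Set.ncard_singleton]

theorem wCount_eq_zero_of_odd {k : ℕ} (hk : Odd k) : wCount m k = 0 := by
  rw [wCount, Set.ncard_eq_zero (finite_setOf_length_eq k _)]
  ext w
  simp only [Set.mem_ofPred_eq, Set.mem_empty_iff_false, iff_false, not_and]
  rintro rfl hw
  exact Nat.not_even_iff_odd.mpr hk ⟨_, (length_eq_two_mul_semilength hw).trans (two_mul _)⟩

theorem wCount_two_mul_le (j : ℕ) : wCount m (2 * j) ≤ catalan j * m ^ j := by
  let B := {w : List (DSym m) | w.length = 2 * j ∧ Balanced w}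
  have : Finite B := (finite_setOf_length_eq _ _).to_subtype
  have hsemi : ∀ w : B, (toDyckWord w.1 w.2.2).semilength = j := fun w => by
    have := length_eq_two_mul_semilength w.2.2
    have := w.2.1
    omega
  let F : B → { p : DyckWord // p.semilength = j } × List.Vector (Fin m) j := fun w =>
    (⟨toDyckWord w.1 w.2.2, hsemi w⟩, ⟨labels w.1, (length_labels w.1).trans (hsemi w)⟩)
  have hF : Function.Injective F := fun w₁ w₂ h =>
    Subtype.ext <| eq_of_shape_eq_of_labels_eq w₁.2.2 w₂.2.2
      (congrArg (fun p => p.1.1.toList) h) (congrArg (fun p => p.2.1) h)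
  have := Nat.card_le_card_of_injective F hF
  rwa [Nat.card_prod, Nat.card_coe_set_eq, Nat.card_eq_fintype_card, Nat.card_eq_fintype_card,
    DyckWord.card_dyckWord_semilength_eq_catalan, card_vector, Fintype.card_fin] at this

/-- With an empty stack every closing bracket keeps the word admissible, so `j₀` is arbitrary. -/
def topLabel (j₀ : Fin m) (w : List (DSym m)) : Fin m :=
  match eval w with
  | some (_, i :: _) => i
  | _ => j₀

def nextSym (j₀ : Fin m) (w : List (DSym m)) : Option (Fin m) → DSym m
  | some j => .a j
  | none => .b (topLabel j₀ w)

theorem nextSym_injective (j₀ : Fin m) (w : List (DSym m)) :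
    Function.Injective (nextSym j₀ w) := by
  rintro (_ | i) (_ | j) h <;> simp_all [nextSym]

theorem Admissible.append_nextSym {w : List (DSym m)} (hw : Admissible w) (j₀ : Fin m)
    (o : Option (Fin m)) : Admissible (w ++ [nextSym j₀ w o]) := by
  obtain ⟨⟨bs, as⟩, he⟩ := Option.ne_none_iff_exists'.mp hw
  rw [Admissible, eval_append_singleton]
  rcases o with _ | j
  · rcases as with _ | ⟨i, as⟩ <;> simp [nextSym, topLabel, he, step]
  · simp [nextSym, he, step]

theorem aCount_zero : aCount m 0 = 1 := by
  rw [aCount, setOf_length_eq_zero _ (by simp [Admissible, eval]), Set.ncard_singleton]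

theorem succ_mul_aCount_le (hm : 0 < m) (n : ℕ) : (m + 1) * aCount m n ≤ aCount m (n + 1) := by
  let A := fun k => {w : List (DSym m) | w.length = k ∧ Admissible w}
  have : Finite (A n) := (finite_setOf_length_eq _ _).to_subtype
  have : Finite (A (n + 1)) := (finite_setOf_length_eq _ _).to_subtype
  let F : Option (Fin m) × A n → A (n + 1) := fun p =>
    ⟨p.2.1 ++ [nextSym ⟨0, hm⟩ p.2.1 p.1], by simp [p.2.2.1], p.2.2.2.append_nextSym _ _⟩
  have hF : Function.Injective F := by
    rintro ⟨o₁, w₁, hw₁⟩ ⟨o₂, w₂, hw₂⟩ h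
    have h' : w₁ ++ [nextSym _ w₁ o₁] = w₂ ++ [nextSym _ w₂ o₂] := congrArg Subtype.val h
    obtain ⟨rfl, hs⟩ := List.append_inj h' (hw₁.1.trans hw₂.1.symm)
    obtain rfl := nextSym_injective _ _ (List.singleton_inj.mp hs)
    rfl
  have := Nat.card_le_card_of_injective F hF
  rwa [Nat.card_prod, Nat.card_coe_set_eq, Nat.card_coe_set_eq, Nat.card_eq_fintype_card,
    Fintype.card_option, Fintype.card_fin] at this

theorem pow_mul_aCount_le (hm : 0 < m) (n k : ℕ) :
    (m + 1) ^ k * aCount m n ≤ aCount m (n + k) := by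
  induction k with
  | zero => simp
  | succ k ih =>
    calc (m + 1) ^ (k + 1) * aCount m n = (m + 1) * ((m + 1) ^ k * aCount m n) := by ring
      _ ≤ (m + 1) * aCount m (n + k) := by gcongr
      _ ≤ aCount m (n + (k + 1)) := succ_mul_aCount_le hm _

theorem aCount_pos (hm : 0 < m) (n : ℕ) : 0 < aCount m n := by
  have := pow_mul_aCount_le hm 0 n
  rw [aCount_zero, mul_one, zero_add] at this
  exact lt_of_lt_of_le (by positivity) this

theorem aCount_mul_div_aCount_le (hm : 0 < m) (n k : ℕ) {c : ℝ} (hc : 0 ≤ c) :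
    aCount m n * c / aCount m (n + k) ≤ c / (m + 1) ^ k := by
  have ha : (0 : ℝ) < aCount m n := by exact_mod_cast aCount_pos hm n
  calc aCount m n * c / aCount m (n + k) ≤ aCount m n * c / ((m + 1) ^ k * aCount m n) := by
        gcongr
        exact_mod_cast pow_mul_aCount_le hm n k
    _ = c / (m + 1) ^ k := by field_simp

theorem sum_range_wCount_div_le (hm : 0 < m) (N : ℕ) :
    ∑ k ∈ range N, (wCount m k : ℝ) / (m + 1) ^ k ≤ (m + 1) / m := by
  have hmR : (0 : ℝ) < m := by exact_mod_cast hm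
  calc ∑ k ∈ range N, (wCount m k : ℝ) / (m + 1) ^ k
      ≤ ∑ k ∈ range (2 * N), (wCount m k : ℝ) / (m + 1) ^ k :=
        sum_le_sum_of_subset_of_nonneg (range_subset_range.mpr (by omega))
          fun _ _ _ => by positivity
    _ = ∑ j ∈ range N, (wCount m (2 * j) : ℝ) / (m + 1) ^ (2 * j) :=
        sum_range_two_mul_of_forall_odd_eq_zero
          (fun k hk => by simp [wCount_eq_zero_of_odd hk]) N
    _ ≤ ∑ j ∈ range N, (catalan j : ℝ) * (m / (m + 1) ^ 2) ^ j := by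
        gcongr with j
        rw [div_pow, ← pow_mul, mul_div_assoc']
        gcongr
        exact_mod_cast wCount_two_mul_le j
    _ ≤ (m + 1) / m := sum_range_catalan_mul_pow_le (by positivity)
        (le_of_eq (by field_simp)) N

end Dyck

/-- for `m > 1` and any `n`,
`∑_{k≥1} a_n · w_k / a_{n+k} ≤ 1/m`. -/
theorem stmt6 (m : ℕ) (hm : 1 < m) (n : ℕ) :
    (∑' k : ℕ, ((Dyck.aCount m n : ℝ) * (Dyck.wCount m (k + 1) : ℝ)) /
        (Dyck.aCount m (n + (k + 1)) : ℝ)) ≤ 1 / (m : ℝ) := by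
  have hm₀ : 0 < m := by omega
  refine Real.tsum_le_of_sum_range_le (fun _ => by positivity) fun N => ?_
  calc ∑ k ∈ range N, (Dyck.aCount m n : ℝ) * Dyck.wCount m (k + 1) / Dyck.aCount m (n + (k + 1))
      ≤ ∑ k ∈ range N, (Dyck.wCount m (k + 1) : ℝ) / (m + 1) ^ (k + 1) :=
        sum_le_sum fun k _ => Dyck.aCount_mul_div_aCount_le hm₀ n (k + 1) (Nat.cast_nonneg _)
    _ = ∑ k ∈ range (N + 1), (Dyck.wCount m k : ℝ) / (m + 1) ^ k - 1 := by
        simp [sum_range_succ' _ N, Dyck.wCount_zero]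
    _ ≤ (m + 1) / m - 1 := by gcongr; exact Dyck.sum_range_wCount_div_le hm₀ _
    _ = 1 / m := by field_simp; ring
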